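/- Let C₀ > 0, let λ_i := C₀√(log(ep/i)/n) for i = 1, …, p, and let A := { u ∈ ℝ^p : ‖u‖_Σ² ≥ ‖u‖_λ²/2 }, where Σ ∈ ℝ^{p×p} is positive semidefinite with diagonal entries Σ_ii ≤ 1. Let ξ be a centered Gaussian vector in ℝ^p with covariance matrix Σ. Then (1/√n) · E[ sup_{u ∈ A, u ≠ 0} ⟨ξ, u⟩ / ‖u‖_Σ ] ≤ 20√2 / C₀. -/

import Mathlib

open MeasureTheory ProbabilityTheory Matrix Finset
open scoped ENNReal NNReal

noncomputable section

namespace Paper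

/-- The `i`-th largest (0-indexed) absolute value of the coordinates of `v`. -/
def ordAbs {m : ℕ} (v : Fin m → ℝ) (i : Fin m) : ℝ :=
  |v (Tuple.sort (fun j => |v j|) i.rev)|

/-- Sorted ℓ¹ norm with weight sequence `γ`. -/
def snorm {m : ℕ} (γ : Fin m → ℝ) (v : Fin m → ℝ) : ℝ :=
  ∑ i, γ i * ordAbs v i

/-- Squared Euclidean norm. -/
def sq2 {m : ℕ} (v : Fin m → ℝ) : ℝ := ∑ i, (v i) ^ 2

/-- Squared `Σ`-norm `⟨Σ u, u⟩`. -/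
def sqS {p : ℕ} (S : Matrix (Fin p) (Fin p) ℝ) (u : Fin p → ℝ) : ℝ :=
  u ⬝ᵥ S.mulVec u

/-- Number of nonzero coordinates of a vector. -/
def spars {m : ℕ} (v : Fin m → ℝ) : ℕ := {i | v i ≠ 0}.ncard

/-- Slope weights `λ_i = C √(log(e·m/i)/n)`, `i = 1, …, m` (here `i : Fin m` is 0-indexed). -/
def lamW (C : ℝ) (n m : ℕ) (i : Fin m) : ℝ :=
  C * Real.sqrt (Real.log (Real.exp 1 * m / ((i : ℕ) + 1)) / n)

/-- Sum of the squares of the `s` largest weights: `Σ_{i=1}^s γ_i²`. -/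
def headSum {m : ℕ} (s : ℕ) (γ : Fin m → ℝ) : ℝ :=
  ∑ i ∈ Finset.univ.filter (fun i : Fin m => (i : ℕ) < s), (γ i) ^ 2

/-- Restricted eigenvalue condition: `‖u‖_Σ² ≥ κ ‖u‖₂²` on the cone `C(s,4)`. -/
def RE {p : ℕ} (S : Matrix (Fin p) (Fin p) ℝ) (lam : Fin p → ℝ) (s : ℕ) (κ : ℝ) : Prop :=
  ∀ u : Fin p → ℝ,
    snorm lam u ≤ 4 * Real.sqrt (headSum s lam) * Real.sqrt (sq2 u) →
    κ * sq2 u ≤ sqS S u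

/-- The square-root Slope loss
`L(β,θ) = (‖Y − Xβ − √n θ‖₂²/(2n))^{1/2} + ‖β‖_λ + ‖θ‖_μ`. -/
def loss {n p : ℕ} (Y : Fin n → ℝ) (X : Matrix (Fin n) (Fin p) ℝ)
    (lam : Fin p → ℝ) (mu : Fin n → ℝ) (β : Fin p → ℝ) (θ : Fin n → ℝ) : ℝ :=
  Real.sqrt (sq2 (fun i => Y i - X.mulVec β i - Real.sqrt n * θ i) / (2 * n)) +
    snorm lam β + snorm mu θ

/-- The rows of `Z` are i.i.d. centered isotropic 1-sub-Gaussian random vectors. -/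
def SubGaussianDesign {Ω : Type} [MeasurableSpace Ω] (μ : Measure Ω)
    (n p : ℕ) (Z : Ω → Fin n → Fin p → ℝ) : Prop :=
  (∀ i, Measurable fun ω => Z ω i) ∧
  iIndepFun (fun i ω => Z ω i) μ ∧
  (∀ i j, IdentDistrib (fun ω => Z ω i) (fun ω => Z ω j) μ μ) ∧
  (∀ i j, ∫ ω, Z ω i j ∂μ = 0) ∧
  (∀ i j k, ∫ ω, Z ω i j * Z ω i k ∂μ = if j = k then (1 : ℝ) else 0) ∧
  (∀ i (v : Fin p → ℝ),
    ∫ ω, Real.exp (∑ j, v j * Z ω i j) ∂μ ≤ Real.exp (sq2 v / 2))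

/-- The coordinates of `ξ` are i.i.d. -/
def IIDCoords {Ω : Type} [MeasurableSpace Ω] (μ : Measure Ω)
    (n : ℕ) (ξ : Ω → Fin n → ℝ) : Prop :=
  (∀ i, Measurable fun ω => ξ ω i) ∧
  iIndepFun (fun i ω => ξ ω i) μ ∧
  (∀ i j, IdentDistrib (fun ω => ξ ω i) (fun ω => ξ ω j) μ μ)

/-- The design matrix `X = Z Σ^{1/2}` built from the rows `Z` and a square root `Rt` of `Σ`. -/
def designX {n p : ℕ} (Z : Fin n → Fin p → ℝ) (Rt : Matrix (Fin p) (Fin p) ℝ) :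
    Matrix (Fin n) (Fin p) ℝ :=
  Matrix.of Z * Rt

end Paper

/-!
For `u` in the cone, `‖u‖_λ ≤ √2 ‖u‖_Σ`, and by the rearrangement inequality
`⟨ξ, u⟩ ≤ ∑ |ξ|_(i) |u|_(i)`; so it suffices to dominate every order statistic of `ξ` by its
weight, `|ξ|_(i) ≤ √2 √(log (e p / i)) W`, with one random variable `W` of mean at most `4`.
At a rank `r`, `r e^{t |ξ|_(r)} ≤ ∑_m (e^{t ξ_m} + e^{-t ξ_m})`, whose mean is at most
`2 p e^{t²/2}` because the coordinates are `N(0, σ²)` with `σ² ≤ 1`. Taking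
`t = 2 √(log (e p / r))` and using `y ≤ e^{β y - 1} / β` gives
`|ξ|_(r) ≤ √(log (e p / r)) (2 + V_r)` with `E V_r ≤ r / (e³ p)`. Only dyadic ranks `r = 2^j`
are needed, and these sum to less than `2 p`, so `W = 2 + ∑_j V_{2^j}` has mean at most `4`.
-/

open Real

lemma sSup_nonneg_of_neg_mem {s : Set ℝ} (hs : ∀ x ∈ s, -x ∈ s) : 0 ≤ sSup s := by
  rcases s.eq_empty_or_nonempty with rfl | ⟨x, hx⟩
  · simp
  · rcases le_total 0 x with h0 | h0
    · exact Real.sSup_nonneg' ⟨x, hx, h0⟩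
    · exact Real.sSup_nonneg' ⟨-x, hs x hx, neg_nonneg.2 h0⟩

section GaussianMarginal

variable {Ω : Type*} [MeasurableSpace Ω] {μ : Measure Ω} {X : Ω → ℝ}

lemma integrable_exp_mul_of_map_eq_gaussianReal {a : ℝ} {v : ℝ≥0}
    (hX : μ.map X = gaussianReal a v) (t : ℝ) : Integrable (fun ω => exp (t * X ω)) μ := by
  have : NeZero μ := ⟨fun h => NeZero.ne (gaussianReal a v) (by rw [← hX, h, Measure.map_zero])⟩
  rw [← mgf_pos_iff, mgf_gaussianReal hX]
  exact exp_pos _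

lemma mgf_le_exp_sq_half_of_map_eq_gaussianReal {v : ℝ≥0} (hX : μ.map X = gaussianReal 0 v)
    (hv : (v : ℝ) ≤ 1) (t : ℝ) : mgf X μ t ≤ exp (t ^ 2 / 2) := by
  rw [mgf_gaussianReal hX]
  gcongr
  nlinarith [sq_nonneg t]

end GaussianMarginal

namespace Paper

section OrderStatistics

variable {m : ℕ}

def ordAbsPerm (v : Fin m → ℝ) : Equiv.Perm (Fin m) :=
  Fin.revPerm.trans (Tuple.sort fun j => |v j|)

lemma ordAbs_eq (v : Fin m → ℝ) (i : Fin m) : ordAbs v i = |v (ordAbsPerm v i)| := rfl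

lemma ordAbs_nonneg (v : Fin m → ℝ) (i : Fin m) : 0 ≤ ordAbs v i := abs_nonneg _

lemma ordAbs_antitone (v : Fin m → ℝ) : Antitone (ordAbs v) := fun _ _ hij =>
  Tuple.monotone_sort (fun j => |v j|) (Fin.rev_le_rev.mpr hij)

lemma sum_comp_ordAbs (F : ℝ → ℝ) (v : Fin m → ℝ) : ∑ i, F (ordAbs v i) = ∑ j, F |v j| :=
  Equiv.sum_comp (ordAbsPerm v) fun j => F |v j|

lemma ordAbs_neg (v : Fin m → ℝ) : ordAbs (-v) = ordAbs v := by
  have h : (fun j => |(-v) j|) = fun j => |v j| := funext fun j => abs_neg (v j)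
  ext i
  rw [ordAbs, ordAbs, h, Pi.neg_apply, abs_neg]

lemma snorm_neg (γ v : Fin m → ℝ) : snorm γ (-v) = snorm γ v := by
  rw [snorm, snorm, ordAbs_neg]

lemma sqS_neg (S : Matrix (Fin m) (Fin m) ℝ) (u : Fin m → ℝ) : sqS S (-u) = sqS S u := by
  simp [sqS, Matrix.mulVec_neg]

lemma sqS_single (S : Matrix (Fin m) (Fin m) ℝ) (j : Fin m) : sqS S (Pi.single j 1) = S j j := by
  simp [sqS]

lemma sum_mul_le_sum_ordAbs_mul (v w : Fin m → ℝ) :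
    ∑ j, v j * w j ≤ ∑ i, ordAbs v i * ordAbs w i := by
  have hmono : Monovary (ordAbs v) (ordAbs w) := fun i j h =>
    ordAbs_antitone v (not_lt.1 fun hij => h.not_ge (ordAbs_antitone w hij.le))
  have hrearr :=
    hmono.sum_smul_comp_perm_le_sum_smul (σ := (ordAbsPerm v).trans (ordAbsPerm w).symm)
  simp only [smul_eq_mul, Equiv.trans_apply] at hrearr
  calc ∑ j, v j * w j ≤ ∑ j, |v j| * |w j| :=
        sum_le_sum fun j _ => (le_abs_self _).trans (abs_mul _ _).le
    _ = ∑ i, |v (ordAbsPerm v i)| * |w (ordAbsPerm v i)| :=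
        (Equiv.sum_comp (ordAbsPerm v) fun j => |v j| * |w j|).symm
    _ = ∑ i, ordAbs v i * ordAbs w ((ordAbsPerm w).symm (ordAbsPerm v i)) := by
        simp only [ordAbs_eq, Equiv.apply_symm_apply]
    _ ≤ ∑ i, ordAbs v i * ordAbs w i := hrearr

lemma mul_comp_ordAbs_le_sum_comp_abs {F : ℝ → ℝ} (hF : Monotone F) (hF0 : ∀ x, 0 ≤ F x)
    (v : Fin m → ℝ) (k : Fin m) : ((k : ℕ) + 1 : ℝ) * F (ordAbs v k) ≤ ∑ j, F |v j| :=
  calc ((k : ℕ) + 1 : ℝ) * F (ordAbs v k) = ∑ _i ∈ Iic k, F (ordAbs v k) := by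
        simp [Fin.card_Iic]
    _ ≤ ∑ i ∈ Iic k, F (ordAbs v i) :=
        sum_le_sum fun i hi => hF (ordAbs_antitone v (mem_Iic.1 hi))
    _ ≤ ∑ i, F (ordAbs v i) :=
        sum_le_sum_of_subset_of_nonneg (subset_univ _) fun _ _ _ => hF0 _
    _ = ∑ j, F |v j| := sum_comp_ordAbs F v

end OrderStatistics

section LevelExcess

variable {m : ℕ}

def expAbsSum (t : ℝ) (x : Fin m → ℝ) : ℝ := ∑ j, (exp (t * x j) + exp (-t * x j))

lemma expAbsSum_nonneg (t : ℝ) (x : Fin m → ℝ) : 0 ≤ expAbsSum t x :=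
  sum_nonneg fun _ _ => by positivity

lemma mul_exp_mul_ordAbs_le_expAbsSum {t : ℝ} (ht : 0 ≤ t) (x : Fin m → ℝ) (k : Fin m) :
    ((k : ℕ) + 1 : ℝ) * exp (t * ordAbs x k) ≤ expAbsSum t x := by
  have hF : Monotone fun a => exp (t * a) := fun a b hab =>
    exp_le_exp.2 (mul_le_mul_of_nonneg_left hab ht)
  refine (mul_comp_ordAbs_le_sum_comp_abs hF (fun _ => (exp_pos _).le) x k).trans
    (sum_le_sum fun j _ => ?_)
  rw [← abs_of_nonneg ht, ← abs_mul, abs_of_nonneg ht, neg_mul]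
  exact exp_abs_le _

def levelExcess (L : ℝ) (r : ℕ) (x : Fin m → ℝ) : ℝ :=
  exp (-4 * L - 1) / (2 * L * r) * expAbsSum (2 * √L) x

lemma levelExcess_nonneg {L : ℝ} (hL : 0 ≤ L) (r : ℕ) (x : Fin m → ℝ) :
    0 ≤ levelExcess L r x :=
  mul_nonneg (by positivity) (expAbsSum_nonneg _ x)

lemma ordAbs_le_levelExcess {L : ℝ} (hL : 0 < L) (x : Fin m → ℝ) (k : Fin m) :
    ordAbs x k ≤ √L * (2 + levelExcess L ((k : ℕ) + 1) x) := by
  rw [levelExcess]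
  set s := √L
  set a := ordAbs x k
  set E := expAbsSum (2 * s) x
  have hs : 0 < s := sqrt_pos.2 hL
  have hsL : s ^ 2 = L := sq_sqrt hL.le
  have hk : (0 : ℝ) < (k : ℕ) + 1 := by positivity
  have hcount : ((k : ℕ) + 1 : ℝ) * exp (2 * s * a) ≤ E :=
    mul_exp_mul_ordAbs_le_expAbsSum (by positivity) x k
  -- `y ≤ exp (β y - 1) / β` for `β = 2 s`, `y = a - 2 s`
  have hlin := add_one_le_exp (2 * s * (a - 2 * s) - 1)
  have hexp : exp (2 * s * (a - 2 * s) - 1) = exp (2 * s * a) * exp (-4 * L - 1) := by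
    rw [← exp_add, ← hsL]; ring_nf
  have hkey : 2 * s * (a - 2 * s) ≤ exp (-4 * L - 1) * E / ((k : ℕ) + 1) := by
    rw [le_div_iff₀ hk]
    nlinarith [exp_pos (-4 * L - 1)]
  have hrhs : s * (2 + exp (-4 * L - 1) / (2 * L * (((k : ℕ) + 1 : ℕ) : ℝ)) * E) =
      2 * s + exp (-4 * L - 1) * E / ((k : ℕ) + 1) / (2 * s) := by
    rw [← hsL]; push_cast; field_simp
  rw [hrhs, ← sub_le_iff_le_add', le_div_iff₀ (by positivity)]
  linarith

variable {Ω : Type*} [MeasurableSpace Ω] {μ : Measure Ω} {ξ : Ω → Fin m → ℝ} {σ : Fin m → ℝ≥0}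

lemma integrable_expAbsSum (hξ : ∀ j, μ.map (fun ω => ξ ω j) = gaussianReal 0 (σ j)) (t : ℝ) :
    Integrable (fun ω => expAbsSum t (ξ ω)) μ :=
  integrable_finsetSum _ fun j _ => (integrable_exp_mul_of_map_eq_gaussianReal (hξ j) t).add
    (integrable_exp_mul_of_map_eq_gaussianReal (hξ j) (-t))

lemma integral_expAbsSum_le (hξ : ∀ j, μ.map (fun ω => ξ ω j) = gaussianReal 0 (σ j))
    (hσ : ∀ j, (σ j : ℝ) ≤ 1) (t : ℝ) :
    ∫ ω, expAbsSum t (ξ ω) ∂μ ≤ 2 * m * exp (t ^ 2 / 2) := by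
  have hcoord (j : Fin m) :
      ∫ ω, (exp (t * ξ ω j) + exp (-t * ξ ω j)) ∂μ ≤ 2 * exp (t ^ 2 / 2) := by
    rw [integral_add (integrable_exp_mul_of_map_eq_gaussianReal (hξ j) t)
      (integrable_exp_mul_of_map_eq_gaussianReal (hξ j) (-t))]
    have hpos := mgf_le_exp_sq_half_of_map_eq_gaussianReal (hξ j) (hσ j) t
    have hneg := mgf_le_exp_sq_half_of_map_eq_gaussianReal (hξ j) (hσ j) (-t)
    rw [neg_sq] at hneg
    simp only [mgf] at hpos hneg
    linarith
  calc ∫ ω, expAbsSum t (ξ ω) ∂μ = ∑ j, ∫ ω, (exp (t * ξ ω j) + exp (-t * ξ ω j)) ∂μ :=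
        integral_finsetSum _ fun j _ =>
          (integrable_exp_mul_of_map_eq_gaussianReal (hξ j) t).add
            (integrable_exp_mul_of_map_eq_gaussianReal (hξ j) (-t))
    _ ≤ ∑ _j : Fin m, 2 * exp (t ^ 2 / 2) := sum_le_sum fun j _ => hcoord j
    _ = 2 * m * exp (t ^ 2 / 2) := by simp; ring

lemma integrable_levelExcess (hξ : ∀ j, μ.map (fun ω => ξ ω j) = gaussianReal 0 (σ j))
    (L : ℝ) (r : ℕ) : Integrable (fun ω => levelExcess L r (ξ ω)) μ :=
  (integrable_expAbsSum hξ _).const_mul _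

lemma integral_levelExcess_le (hξ : ∀ j, μ.map (fun ω => ξ ω j) = gaussianReal 0 (σ j))
    (hσ : ∀ j, (σ j : ℝ) ≤ 1) {L : ℝ} (hL : 1 ≤ L) (r : ℕ) :
    ∫ ω, levelExcess L r (ξ ω) ∂μ ≤ m * exp (-2 * L - 1) / r := by
  have hsq : (2 * √L) ^ 2 / 2 = 2 * L := by
    rw [mul_pow, sq_sqrt (by linarith)]; ring
  have hmgf := integral_expAbsSum_le (μ := μ) hξ hσ (2 * √L)
  rw [hsq] at hmgf
  have hexp : exp (-4 * L - 1) * exp (2 * L) = exp (-2 * L - 1) := by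
    rw [← exp_add]; ring_nf
  calc ∫ ω, levelExcess L r (ξ ω) ∂μ
      = exp (-4 * L - 1) / (2 * L * r) * ∫ ω, expAbsSum (2 * √L) (ξ ω) ∂μ :=
        integral_const_mul _ _
    _ ≤ exp (-4 * L - 1) / (2 * L * r) * (2 * m * exp (2 * L)) := by gcongr
    _ = m * exp (-2 * L - 1) / r / L := by
        rw [← hexp]; field_simp
    _ ≤ m * exp (-2 * L - 1) / r := div_le_self (by positivity) hL

end LevelExcess

def slopeLog (p r : ℕ) : ℝ := log (exp 1 * p / r)

lemma lamW_eq (C : ℝ) (n p : ℕ) (i : Fin p) :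
    lamW C n p i = C / √n * √(slopeLog p ((i : ℕ) + 1)) := by
  rw [lamW, slopeLog, sqrt_div' _ (Nat.cast_nonneg n)]
  push_cast
  ring

lemma snorm_lamW (C : ℝ) (n p : ℕ) (u : Fin p → ℝ) :
    snorm (lamW C n p) u = C / √n * ∑ i : Fin p, √(slopeLog p ((i : ℕ) + 1)) * ordAbs u i := by
  simp only [snorm, lamW_eq, mul_sum, mul_assoc]

lemma one_le_slopeLog {p r : ℕ} (hr : 0 < r) (hrp : r ≤ p) : 1 ≤ slopeLog p r := by
  have hr' : (0 : ℝ) < r := by exact_mod_cast hr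
  have hrp' : (r : ℝ) ≤ p := by exact_mod_cast hrp
  rw [slopeLog, le_log_iff_exp_le (by positivity [hr'.trans_le hrp']), le_div_iff₀ hr']
  exact mul_le_mul_of_nonneg_left hrp' (exp_pos 1).le

lemma one_le_slopeLog_two_pow {p : ℕ} (hp : 0 < p) {j : ℕ} (hj : j ≤ Nat.log 2 p) :
    1 ≤ slopeLog p (2 ^ j) :=
  one_le_slopeLog (Nat.two_pow_pos j)
    ((Nat.pow_le_pow_right two_pos hj).trans (Nat.pow_log_le_self 2 hp.ne'))

lemma slopeLog_le_two_mul {p r s : ℕ} (hr : 0 < r) (hs : 0 < s) (hsr : s ≤ 2 * r)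
    (hsp : s ≤ p) : slopeLog p r ≤ 2 * slopeLog p s := by
  have hr' : (0 : ℝ) < r := by exact_mod_cast hr
  have hs' : (0 : ℝ) < s := by exact_mod_cast hs
  have hp' : (0 : ℝ) < p := by exact_mod_cast hs.trans_le hsp
  have hsplit : slopeLog p r = slopeLog p s + log (s / r) := by
    rw [slopeLog, slopeLog, ← log_mul (by positivity) (by positivity)]
    congr 1
    field_simp
  have hratio : log (s / r) ≤ 1 := by
    have : (s : ℝ) / r ≤ 2 := by
      rw [div_le_iff₀ hr']; exact_mod_cast hsr
    linarith [log_le_sub_one_of_pos (by positivity : (0 : ℝ) < s / r)]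
  linarith [one_le_slopeLog hs hsp]

lemma mul_exp_neg_two_mul_slopeLog_sub_one_div {p r : ℕ} (hp : 0 < p) (hr : 0 < r) :
    p * exp (-2 * slopeLog p r - 1) / r = r / (exp 1 ^ 3 * p) := by
  have hp' : (0 : ℝ) < p := by exact_mod_cast hp
  have hr' : (0 : ℝ) < r := by exact_mod_cast hr
  have hexp : exp (slopeLog p r) = exp 1 * p / r := exp_log (by positivity)
  have hsplit : exp (-2 * slopeLog p r - 1) = (exp (slopeLog p r) ^ 2 * exp 1)⁻¹ := by
    rw [sq, ← exp_add, ← exp_add, ← exp_neg]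
    ring_nf
  rw [hsplit, hexp]
  field_simp

section OrderStatBound

variable {p : ℕ}

def orderStatBound (p : ℕ) (x : Fin p → ℝ) : ℝ :=
  2 + ∑ j ∈ range (Nat.log 2 p + 1), levelExcess (slopeLog p (2 ^ j)) (2 ^ j) x

lemma two_add_levelExcess_le_orderStatBound (hp : 0 < p) {j : ℕ} (hj : j ≤ Nat.log 2 p)
    (x : Fin p → ℝ) : 2 + levelExcess (slopeLog p (2 ^ j)) (2 ^ j) x ≤ orderStatBound p x := by
  have hnonneg : ∀ j' ∈ range (Nat.log 2 p + 1),
      0 ≤ levelExcess (slopeLog p (2 ^ j')) (2 ^ j') x := fun j' hj' =>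
    levelExcess_nonneg (zero_le_one.trans
      (one_le_slopeLog_two_pow hp (Nat.lt_succ_iff.1 (mem_range.1 hj')))) _ x
  rw [orderStatBound]
  gcongr
  exact single_le_sum hnonneg (mem_range.2 (Nat.lt_succ_of_le hj))

lemma two_le_orderStatBound (hp : 0 < p) (x : Fin p → ℝ) : 2 ≤ orderStatBound p x := by
  have h := two_add_levelExcess_le_orderStatBound hp (Nat.zero_le _) x
  have h0 := levelExcess_nonneg (zero_le_one.trans (one_le_slopeLog_two_pow hp (Nat.zero_le _)))
    (2 ^ 0) x
  linarith

lemma ordAbs_le_orderStatBound (x : Fin p → ℝ) (i : Fin p) :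
    ordAbs x i ≤ √2 * √(slopeLog p ((i : ℕ) + 1)) * orderStatBound p x := by
  have hp : 0 < p := i.pos
  set j := Nat.log 2 ((i : ℕ) + 1)
  have hj_le : 2 ^ j ≤ (i : ℕ) + 1 := Nat.pow_log_le_self 2 (Nat.succ_ne_zero _)
  have hj_lt : (i : ℕ) + 1 < 2 ^ (j + 1) := Nat.lt_pow_succ_log_self one_lt_two _
  have hjp : j ≤ Nat.log 2 p := Nat.log_mono_right i.isLt
  let k : Fin p := ⟨2 ^ j - 1, by omega⟩
  have hk : (k : ℕ) + 1 = 2 ^ j := Nat.sub_add_cancel Nat.one_le_two_pow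
  have hL := one_le_slopeLog_two_pow hp hjp
  have hlevel := ordAbs_le_levelExcess (by linarith) x k
  rw [hk] at hlevel
  have hsqrt : √(slopeLog p (2 ^ j)) ≤ √2 * √(slopeLog p ((i : ℕ) + 1)) := by
    rw [← sqrt_mul zero_le_two]
    exact sqrt_le_sqrt (slopeLog_le_two_mul (Nat.two_pow_pos j) (Nat.succ_pos _)
      (by rw [pow_succ] at hj_lt; omega) i.isLt)
  calc ordAbs x i ≤ ordAbs x k := ordAbs_antitone x (Fin.le_def.2 (by simp only [k]; omega))
    _ ≤ √(slopeLog p (2 ^ j)) * (2 + levelExcess (slopeLog p (2 ^ j)) (2 ^ j) x) := hlevel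
    _ ≤ √(slopeLog p (2 ^ j)) * orderStatBound p x := by
        gcongr; exact two_add_levelExcess_le_orderStatBound hp hjp x
    _ ≤ √2 * √(slopeLog p ((i : ℕ) + 1)) * orderStatBound p x := by
        gcongr; linarith [two_le_orderStatBound hp x]

lemma sum_mul_le_orderStatBound_mul_snorm {n : ℕ} (hn : 0 < n) {C : ℝ} (hC : 0 < C)
    (x u : Fin p → ℝ) :
    ∑ i, x i * u i ≤ √2 * √n / C * orderStatBound p x * snorm (lamW C n p) u := by
  have hn' : 0 < √(n : ℝ) := sqrt_pos.2 (by exact_mod_cast hn)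
  calc ∑ i, x i * u i ≤ ∑ i, ordAbs x i * ordAbs u i := sum_mul_le_sum_ordAbs_mul x u
    _ ≤ ∑ i : Fin p, √2 * √(slopeLog p ((i : ℕ) + 1)) * orderStatBound p x * ordAbs u i :=
        sum_le_sum fun i _ =>
          mul_le_mul_of_nonneg_right (ordAbs_le_orderStatBound x i) (ordAbs_nonneg u i)
    _ = √2 * √n / C * orderStatBound p x * snorm (lamW C n p) u := by
        rw [snorm_lamW, mul_sum, mul_sum]
        refine sum_congr rfl fun i _ => ?_
        field_simp

lemma sum_range_log_two_pow_le (hp : 0 < p) :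
    ∑ j ∈ range (Nat.log 2 p + 1), (2 : ℝ) ^ j ≤ 2 * p := by
  have hN : 2 ^ Nat.log 2 p ≤ p := Nat.pow_log_le_self 2 hp.ne'
  have : ∑ j ∈ range (Nat.log 2 p + 1), 2 ^ j ≤ 2 * p := by
    rw [Nat.geomSum_eq le_rfl, pow_succ]; omega
  exact_mod_cast this

variable {Ω : Type*} [MeasurableSpace Ω] {μ : Measure Ω} {ξ : Ω → Fin p → ℝ} {σ : Fin p → ℝ≥0}

lemma integrable_orderStatBound [IsFiniteMeasure μ]
    (hξ : ∀ j, μ.map (fun ω => ξ ω j) = gaussianReal 0 (σ j)) :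
    Integrable (fun ω => orderStatBound p (ξ ω)) μ :=
  (integrable_const 2).add (integrable_finsetSum _ fun _ _ => integrable_levelExcess hξ _ _)

lemma integral_levelExcess_two_pow_le (hp : 0 < p)
    (hξ : ∀ j, μ.map (fun ω => ξ ω j) = gaussianReal 0 (σ j)) (hσ : ∀ j, (σ j : ℝ) ≤ 1)
    {j : ℕ} (hj : j ≤ Nat.log 2 p) :
    ∫ ω, levelExcess (slopeLog p (2 ^ j)) (2 ^ j) (ξ ω) ∂μ ≤ 2 ^ j / p := by
  have hp' : (0 : ℝ) < p := by exact_mod_cast hp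
  calc _ ≤ p * exp (-2 * slopeLog p (2 ^ j) - 1) / (2 ^ j : ℕ) :=
        integral_levelExcess_le hξ hσ (one_le_slopeLog_two_pow hp hj) _
    _ = (2 ^ j : ℕ) / (exp 1 ^ 3 * p) :=
        mul_exp_neg_two_mul_slopeLog_sub_one_div hp (Nat.two_pow_pos j)
    _ ≤ 2 ^ j / p := by
        push_cast
        gcongr
        exact le_mul_of_one_le_left hp'.le (one_le_pow₀ (one_le_exp zero_le_one))

lemma integral_orderStatBound_le [IsProbabilityMeasure μ] (hp : 0 < p)
    (hξ : ∀ j, μ.map (fun ω => ξ ω j) = gaussianReal 0 (σ j)) (hσ : ∀ j, (σ j : ℝ) ≤ 1) :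
    ∫ ω, orderStatBound p (ξ ω) ∂μ ≤ 4 := by
  set N := Nat.log 2 p
  have hp' : (0 : ℝ) < p := by exact_mod_cast hp
  have hint : ∀ j ∈ range (N + 1),
      Integrable (fun ω => levelExcess (slopeLog p (2 ^ j)) (2 ^ j) (ξ ω)) μ :=
    fun j _ => integrable_levelExcess hξ _ _
  have hgeom : (∑ j ∈ range (N + 1), (2 : ℝ) ^ j) / p ≤ 2 := by
    rw [div_le_iff₀ hp']; linarith [sum_range_log_two_pow_le hp]
  calc ∫ ω, orderStatBound p (ξ ω) ∂μ
      = 2 + ∑ j ∈ range (N + 1), ∫ ω, levelExcess (slopeLog p (2 ^ j)) (2 ^ j) (ξ ω) ∂μ := by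
        simp only [orderStatBound]
        rw [integral_add (integrable_const 2) (integrable_finsetSum _ hint),
          integral_finsetSum _ hint]
        simp
    _ ≤ 2 + ∑ j ∈ range (N + 1), (2 : ℝ) ^ j / p := by
        gcongr with j hj
        exact integral_levelExcess_two_pow_le hp hξ hσ (Nat.lt_succ_iff.1 (mem_range.1 hj))
    _ ≤ 4 := by
        rw [← sum_div]
        linarith

end OrderStatBound

section ConeSup

variable {p : ℕ}

def coneSup (C : ℝ) (n : ℕ) (S : Matrix (Fin p) (Fin p) ℝ) (x : Fin p → ℝ) : ℝ :=
  sSup ((fun u : Fin p → ℝ => (∑ i, x i * u i) / √(sqS S u)) ''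
    {u | u ≠ 0 ∧ snorm (lamW C n p) u ^ 2 / 2 ≤ sqS S u})

lemma coneSup_nonneg (C : ℝ) (n : ℕ) (S : Matrix (Fin p) (Fin p) ℝ) (x : Fin p → ℝ) :
    0 ≤ coneSup C n S x := by
  refine sSup_nonneg_of_neg_mem ?_
  rintro _ ⟨u, hu, rfl⟩
  refine ⟨-u, ⟨neg_ne_zero.2 hu.1, by rw [snorm_neg, sqS_neg]; exact hu.2⟩, ?_⟩
  simp [sqS_neg, neg_div]

lemma coneSup_le {n : ℕ} (hn : 0 < n) (hp : 0 < p) {C : ℝ} (hC : 0 < C)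
    (S : Matrix (Fin p) (Fin p) ℝ) (x : Fin p → ℝ) :
    coneSup C n S x ≤ 2 * √n / C * orderStatBound p x := by
  have hW := two_le_orderStatBound hp x
  refine Real.sSup_le ?_ (by positivity)
  rintro _ ⟨u, ⟨-, hu⟩, rfl⟩
  have hsnorm : snorm (lamW C n p) u ≤ √2 * √(sqS S u) := by
    rw [← sqrt_mul zero_le_two]
    exact (le_abs_self _).trans (abs_le_sqrt (by linarith))
  refine div_le_of_le_mul₀ (sqrt_nonneg _) (by positivity) ?_
  calc ∑ i, x i * u i ≤ √2 * √n / C * orderStatBound p x * snorm (lamW C n p) u :=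
        sum_mul_le_orderStatBound_mul_snorm hn hC x u
    _ ≤ √2 * √n / C * orderStatBound p x * (√2 * √(sqS S u)) := by gcongr
    _ = 2 * √n / C * orderStatBound p x * √(sqS S u) := by
        linear_combination (√(n : ℝ) / C * orderStatBound p x * √(sqS S u)) *
          mul_self_sqrt (zero_le_two (α := ℝ))

end ConeSup

end Paper

open Paper

theorem statement_18_general (n p : ℕ) (hn : 0 < n) (hp : 0 < p) (C₀ : ℝ) (hC₀ : 0 < C₀)
    (S : Matrix (Fin p) (Fin p) ℝ) (hdiag : ∀ i, S i i ≤ 1)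
    (Ω : Type) [MeasurableSpace Ω] (μ : Measure Ω) [IsProbabilityMeasure μ]
    (ξ : Ω → Fin p → ℝ)
    (hgauss : ∀ v : Fin p → ℝ,
      Measure.map (fun ω => ∑ i, v i * ξ ω i) μ =
        gaussianReal 0 (Real.toNNReal (Paper.sqS S v))) :
    (1 / Real.sqrt n) *
        ∫ ω, sSup
          ((fun u : Fin p → ℝ => (∑ i, ξ ω i * u i) / Real.sqrt (Paper.sqS S u)) ''
            {u | u ≠ 0 ∧ (Paper.snorm (Paper.lamW C₀ n p) u) ^ 2 / 2 ≤ Paper.sqS S u}) ∂μ ≤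
      20 * Real.sqrt 2 / C₀ := by
  have hcoord (j : Fin p) : μ.map (fun ω => ξ ω j) = gaussianReal 0 (S j j).toNNReal := by
    simpa [sqS_single, Pi.single_apply] using hgauss (Pi.single j 1)
  have hvar (j : Fin p) : ((S j j).toNNReal : ℝ) ≤ 1 := by
    simpa using hdiag j
  have hn' : 0 < √(n : ℝ) := sqrt_pos.2 (by exact_mod_cast hn)
  change 1 / √n * ∫ ω, coneSup C₀ n S (ξ ω) ∂μ ≤ _
  calc _ ≤ 1 / √n * ∫ ω, 2 * √n / C₀ * orderStatBound p (ξ ω) ∂μ := by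
        refine mul_le_mul_of_nonneg_left ?_ (by positivity)
        exact integral_mono_of_nonneg (ae_of_all _ fun ω => coneSup_nonneg C₀ n S (ξ ω))
          ((integrable_orderStatBound hcoord).const_mul _)
          (ae_of_all _ fun ω => coneSup_le hn hp hC₀ S (ξ ω))
    _ = 2 / C₀ * ∫ ω, orderStatBound p (ξ ω) ∂μ := by
        rw [integral_const_mul]; field_simp
    _ ≤ 2 / C₀ * 4 := by gcongr; exact integral_orderStatBound_le hp hcoord hvar
    _ = 8 / C₀ := by ring
    _ ≤ 20 * √2 / C₀ := by
        gcongr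
        nlinarith [one_lt_sqrt_two]

/-- Gaussian mean width bound for the cone
`A = {u : ‖u‖_Σ² ≥ ‖u‖_λ²/2}` with weights `λ_i = C₀√(log(ep/i)/n)`. -/
theorem statement_18 (n p : ℕ) (hn : 0 < n) (hp : 0 < p) (C₀ : ℝ) (hC₀ : 0 < C₀)
    (S : Matrix (Fin p) (Fin p) ℝ) (hS : S.PosSemidef) (hdiag : ∀ i, S i i ≤ 1)
    (Ω : Type) [MeasurableSpace Ω] (μ : Measure Ω) [IsProbabilityMeasure μ]
    (ξ : Ω → Fin p → ℝ) (hmeas : Measurable ξ)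
    (hgauss : ∀ v : Fin p → ℝ,
      Measure.map (fun ω => ∑ i, v i * ξ ω i) μ =
        gaussianReal 0 (Real.toNNReal (Paper.sqS S v))) :
    (1 / Real.sqrt n) *
        ∫ ω, sSup
          ((fun u : Fin p → ℝ => (∑ i, ξ ω i * u i) / Real.sqrt (Paper.sqS S u)) ''
            {u | u ≠ 0 ∧ (Paper.snorm (Paper.lamW C₀ n p) u) ^ 2 / 2 ≤ Paper.sqS S u}) ∂μ ≤
      20 * Real.sqrt 2 / C₀ :=
  statement_18_general n p hn hp C₀ hC₀ S hdiag Ω μ ξ hgauss
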